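/- The traceless square of a conformal Killing–Yano tensor is a conformal Killing tensor (flat case): let A be a smooth 2-form field on ℝ⁴ satisfying the flat conformal Killing–Yano equation, let K(x)(y,z) := η(Â(x)(Â(x)y), z) be its square, and let P := K − (1/4)·(tr K̂)·η be its traceless part (where tr K̂(x) is the trace of the endomorphism associated with K(x)). Then P satisfies the conformal Killing tensor equation: there exists a smooth 1-form field b on ℝ⁴ such that (D_uP)(x)(v,w) + (D_vP)(x)(w,u) + (D_wP)(x)(u,v) = η(u,v)·b(x)(w) + η(v,w)·b(x)(u) + η(w,u)·b(x)(v) for all x, u, v, w. -/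

import Mathlib

open Matrix Real

/-- Spacetime `ℝ⁴` with the standard basis. -/
abbrev V4 : Type := Fin 4 → ℝ

/-- `4×4` real matrices: components of bilinear forms / endomorphisms of `ℝ⁴`
in the standard basis `(e₀,e₁,e₂,e₃)`. -/
abbrev Mat4 : Type := Matrix (Fin 4) (Fin 4) ℝ

/-- The Minkowski metric `diag(-1,1,1,1)` (it equals its own inverse). -/
noncomputable def ηm : Mat4 := Matrix.diagonal ![-1, 1, 1, 1]

/-- The Minkowski bilinear form `η(x,y) = -x₀y₀ + x₁y₁ + x₂y₂ + x₃y₃`. -/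
noncomputable def ηb (x y : V4) : ℝ := x ⬝ᵥ ηm *ᵥ y

/-- A vector `x` is timelike if `η(x,x) < 0`. -/
noncomputable def Timelike (x : V4) : Prop := ηb x x < 0

/-- Evaluation of the bilinear form with component matrix `B`:
`B(x,y) = Σ xᵅ B_{αβ} yᵝ`. -/
noncomputable def bil (B : Mat4) (x y : V4) : ℝ := x ⬝ᵥ B *ᵥ y

/-- A 2-form is a skew-symmetric bilinear form. -/
noncomputable def IsTwoForm (B : Mat4) : Prop := Bᵀ = -B

/-- The endomorphism `B̂` associated with the bilinear form `B`, i.e. the unique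
endomorphism with `η(B̂x, y) = B(x,y)` for all `x, y`.  (Indeed
`ηb (hat B *ᵥ x) y = bil B x y`.) -/
noncomputable def hat (B : Mat4) : Mat4 := ηm * Bᵀ

/-- The totally antisymmetric Levi-Civita symbol on four indices, `ε₀₁₂₃ = 1`. -/
noncomputable def lc (a b c d : Fin 4) : ℝ :=
  (((b : ℕ) : ℝ) - ((a : ℕ) : ℝ)) * (((c : ℕ) : ℝ) - ((a : ℕ) : ℝ)) *
    (((d : ℕ) : ℝ) - ((a : ℕ) : ℝ)) * (((c : ℕ) : ℝ) - ((b : ℕ) : ℝ)) *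
    (((d : ℕ) : ℝ) - ((b : ℕ) : ℝ)) * (((d : ℕ) : ℝ) - ((c : ℕ) : ℝ)) / 12

/-- The Hodge dual of a 2-form:
`(*F)(e_α,e_β) = (1/2) Σ ε_{αβγδ} η^{γμ} η^{δν} F(e_μ,e_ν)`. -/
noncomputable def hodge (F : Mat4) : Mat4 :=
  Matrix.of fun α β => (1/2) * ∑ γ, ∑ δ, ∑ μ, ∑ ν, lc α β γ δ * ηm γ μ * ηm δ ν * F μ ν

/-- A unitary 2-form: `tr(Û∘Û) = 2` and `tr(Û∘(*U)̂) = 0`. -/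
noncomputable def IsUnitary (U : Mat4) : Prop :=
  IsTwoForm U ∧ (hat U * hat U).trace = 2 ∧ (hat U * hat (hodge U)).trace = 0

/-- An endomorphism `L` is η-self-adjoint if `η(Lx,y) = η(x,Ly)` for all `x, y`. -/
noncomputable def SelfAdj (L : Mat4) : Prop := ∀ x y : V4, ηb (L *ᵥ x) y = ηb x (L *ᵥ y)

/-- The standard basis vector `e_i` of `ℝ⁴`. -/
noncomputable def e (i : Fin 4) : V4 := Pi.single i 1

/-- The directional derivative `(D_u A)(x)` of a bilinear-form-valued field `A`
at the point `x` in the direction `u` (computed entrywise). -/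
noncomputable def Dd (A : V4 → Mat4) (x u : V4) : Mat4 :=
  Matrix.of fun i j => fderiv ℝ (fun y => A y i j) x u

/-- A smooth 2-form field: a smooth map from `ℝ⁴` to the space of
skew-symmetric bilinear forms on `ℝ⁴`. -/
noncomputable def SmoothTwoFormField (A : V4 → Mat4) : Prop :=
  (∀ x, (A x)ᵀ = -(A x)) ∧ ∀ i j, ContDiff ℝ (⊤ : ℕ∞) (fun x => A x i j)

/-- The flat Killing–Yano equation: `(D_uA)(x)(v,z) + (D_vA)(x)(u,z) = 0`. -/
noncomputable def FlatKY (A : V4 → Mat4) : Prop :=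
  ∀ x u v z : V4, bil (Dd A x u) v z + bil (Dd A x v) u z = 0

/-- The codifferential `(δA)(x)(z) = -Σ η^{αβ} (D_{e_α}A)(x)(e_β, z)`. -/
noncomputable def codiff (A : V4 → Mat4) (x z : V4) : ℝ :=
  -∑ α, ∑ β, ηm α β * bil (Dd A x (e α)) (e β) z

/-- The exterior derivative
`(dA)(x)(u,v,w) = (D_uA)(x)(v,w) + (D_vA)(x)(w,u) + (D_wA)(x)(u,v)`. -/
noncomputable def extd (A : V4 → Mat4) (x u v w : V4) : ℝ :=
  bil (Dd A x u) v w + bil (Dd A x v) w u + bil (Dd A x w) u v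

/-- The flat conformal Killing–Yano equation:
`(D_uA)(x)(v,z) + (D_vA)(x)(u,z) = 2η(u,v)a(x)(z) - a(x)(u)η(v,z) - a(x)(v)η(u,z)`
with `a = -(1/3)δA`. -/
noncomputable def FlatCKY (A : V4 → Mat4) : Prop :=
  ∀ x u v z : V4, bil (Dd A x u) v z + bil (Dd A x v) u z =
    2 * ηb u v * (-(1/3) * codiff A x z) - (-(1/3) * codiff A x u) * ηb v z -
      (-(1/3) * codiff A x v) * ηb u z

/-- The interior contraction of a 1-form `ω` with a 2-form `G`:
`(i(ω)G)(z) = Σ η^{αβ} ω(e_α) G(e_β, z)`. -/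
noncomputable def icontr (ω : V4 → ℝ) (G : Mat4) (z : V4) : ℝ :=
  ∑ α, ∑ β, ηm α β * ω (e α) * bil G (e β) z
section AlgLemmas

lemma eta_offdiag {i j : Fin 4} (h : i ≠ j) : ηm i j = 0 := by
  simp [ηm, Matrix.diagonal_apply_ne _ h]

lemma eta_sq (i : Fin 4) : ηm i i * ηm i i = 1 := by
  fin_cases i <;> norm_num [ηm]

lemma eta_eta : ηm * ηm = 1 := by
  rw [show (ηm : Mat4) = Matrix.diagonal ![-1,1,1,1] from rfl, Matrix.diagonal_mul_diagonal]
  ext i j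
  by_cases h : i = j
  · subst h; rw [Matrix.diagonal_apply_eq, Matrix.one_apply_eq]; fin_cases i <;> norm_num
  · rw [Matrix.diagonal_apply_ne _ h, Matrix.one_apply_ne h]

lemma eta_transpose : (ηm : Mat4)ᵀ = ηm := by
  rw [show (ηm : Mat4) = Matrix.diagonal ![-1,1,1,1] from rfl, Matrix.diagonal_transpose]

lemma e_apply (i j : Fin 4) : e i j = if j = i then 1 else 0 := by
  simp [e, Pi.single_apply]

lemma bil_expand (M : Mat4) (v w : V4) : bil M v w = ∑ i, ∑ j, v i * M i j * w j := by
  simp [bil, dotProduct, mulVec, Finset.mul_sum, mul_assoc]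

lemma bil_e_right (M : Mat4) (v : V4) (σ : Fin 4) : bil M v (e σ) = ∑ i, v i * M i σ := by
  simp [bil_expand, e, Pi.single_apply]

lemma bil_e_left (M : Mat4) (w : V4) (σ : Fin 4) : bil M (e σ) w = ∑ j, M σ j * w j := by
  simp [bil_expand, e, Pi.single_apply]

lemma bil_ee (M : Mat4) (δ α : Fin 4) : bil M (e δ) (e α) = M δ α := by
  rw [bil_e_left, Finset.sum_eq_single α]
  · simp [e_apply]
  · intro j _ hj; simp [e_apply, hj]
  · simp

lemma etab_e (v : V4) (σ : Fin 4) : ηb v (e σ) = v σ * ηm σ σ := by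
  have h : ηb v (e σ) = bil ηm v (e σ) := rfl
  rw [h, bil_e_right, Finset.sum_eq_single σ]
  · intro τ _ hτ; rw [eta_offdiag hτ]; ring
  · simp

lemma mEn_apply (M N : Mat4) (i j : Fin 4) :
    (M * ηm * N) i j = ∑ σ, M i σ * ηm σ σ * N σ j := by
  rw [Matrix.mul_apply]
  refine Finset.sum_congr rfl fun σ _ => ?_
  rw [show ηm = Matrix.diagonal ![-1,1,1,1] from rfl, Matrix.mul_diagonal,
    Matrix.diagonal_apply_eq]

lemma bil_mEm (M N : Mat4) (v w : V4) :
    bil (M * ηm * N) v w = ∑ i, ∑ j, ∑ σ, v i * M i σ * ηm σ σ * N σ j * w j := by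
  rw [bil_expand]
  refine Finset.sum_congr rfl fun i _ => Finset.sum_congr rfl fun j _ => ?_
  rw [mEn_apply, Finset.mul_sum, Finset.sum_mul]
  exact Finset.sum_congr rfl fun σ _ => by ring

lemma B1 (M N : Mat4) (v w : V4) :
    bil (M * ηm * N) v w = ∑ σ, bil M v (e σ) * ηm σ σ * bil N (e σ) w := by
  rw [bil_mEm]
  calc (∑ i, ∑ j, ∑ σ, v i * M i σ * ηm σ σ * N σ j * w j)
      = ∑ σ, ∑ i, ∑ j, v i * M i σ * ηm σ σ * N σ j * w j := by
        rw [show (∑ i, ∑ j, ∑ σ, v i * M i σ * ηm σ σ * N σ j * w j)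
            = ∑ i, ∑ σ, ∑ j, v i * M i σ * ηm σ σ * N σ j * w j from
          Finset.sum_congr rfl fun i _ => Finset.sum_comm, Finset.sum_comm]
    _ = ∑ σ, bil M v (e σ) * ηm σ σ * bil N (e σ) w := by
        refine Finset.sum_congr rfl fun σ _ => ?_
        rw [bil_e_right, bil_e_left, Finset.sum_mul, Finset.sum_mul]
        refine Finset.sum_congr rfl fun i _ => ?_
        rw [Finset.mul_sum]
        exact Finset.sum_congr rfl fun j _ => by ring

lemma B2 (G : Mat4) (v w : V4) :
    (∑ σ, ηb v (e σ) * ηm σ σ * bil G (e σ) w) = bil G v w := by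
  have h : ∀ σ : Fin 4, ηb v (e σ) * ηm σ σ * bil G (e σ) w = v σ * bil G (e σ) w := by
    intro σ; rw [etab_e]; linear_combination v σ * bil G (e σ) w * eta_sq σ
  simp only [h]
  simp only [bil_expand, Fin.sum_univ_four, e_apply]
  simp
  ring

lemma bil_transpose (M : Mat4) (v w : V4) : bil Mᵀ v w = bil M w v := by
  simp only [bil_expand, Matrix.transpose_apply, Fin.sum_univ_four]; ring

lemma bil_neg (M : Mat4) (v w : V4) : bil (-M) v w = -(bil M v w) := by
  simp only [bil_expand, Matrix.neg_apply, Fin.sum_univ_four]; ring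

lemma bil_skew_add (M : Mat4) (h : Mᵀ = -M) (v w : V4) : bil M v w + bil M w v = 0 := by
  have h1 := bil_transpose M w v
  rw [h, bil_neg] at h1
  linarith

lemma bil_swap (M N : Mat4) (hM : Mᵀ = -M) (hN : Nᵀ = -N) (v w : V4) :
    bil (M * ηm * N) v w = bil (N * ηm * M) w v := by
  have h1 : bil ((M * ηm * N)ᵀ) w v = bil (M * ηm * N) v w := bil_transpose _ _ _
  rw [← h1, Matrix.transpose_mul, Matrix.transpose_mul, eta_transpose, hM, hN,
    Matrix.mul_assoc, Matrix.neg_mul, Matrix.mul_neg, Matrix.mul_neg, neg_neg,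
    ← Matrix.mul_assoc]

lemma hat_apply (B : Mat4) (i j : Fin 4) : hat B i j = ηm i i * B j i := by
  rw [hat, show ηm = Matrix.diagonal ![-1,1,1,1] from rfl, Matrix.diagonal_mul,
    Matrix.transpose_apply, Matrix.diagonal_apply_eq]

lemma etab_mulVec (M : Mat4) (v w : V4) : ηb (M *ᵥ v) w = bil (Mᵀ * ηm) v w := by
  simp only [ηb, bil, dotProduct, mulVec, Matrix.mul_apply, Matrix.transpose_apply,
    Fin.sum_univ_four]
  ring

lemma KA (B : Mat4) (v w : V4) : ηb ((hat B * hat B) *ᵥ v) w = bil (B * ηm * B) v w := by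
  have key : (hat B * hat B)ᵀ * ηm = B * ηm * B := by
    rw [Matrix.transpose_mul, hat, Matrix.transpose_mul, Matrix.transpose_transpose,
      eta_transpose]
    simp only [Matrix.mul_assoc]
    rw [eta_eta, Matrix.mul_one]
  rw [etab_mulVec, key]

lemma trace_expand (B : Mat4) :
    (hat B * hat B).trace = ∑ i, ∑ p, (ηm i i * ηm p p) * (B p i * B i p) := by
  rw [Matrix.trace]
  refine Finset.sum_congr rfl fun i _ => ?_
  rw [Matrix.diag, Matrix.mul_apply]
  exact Finset.sum_congr rfl fun p _ => by rw [hat_apply, hat_apply]; ring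

lemma icontr_eq (ω : V4 → ℝ) (G : Mat4) (z : V4) :
    icontr ω G z = ∑ σ, ω (e σ) * ηm σ σ * bil G (e σ) z := by
  rw [icontr]
  refine Finset.sum_congr rfl fun σ _ => ?_
  rw [Finset.sum_eq_single σ]
  · ring
  · intro τ _ hτ; rw [eta_offdiag (Ne.symm hτ)]; ring
  · simp

lemma bil_add_right (M : Mat4) (z w w' : V4) : bil M z (w + w') = bil M z w + bil M z w' := by
  simp [bil, Matrix.mulVec_add, dotProduct_add]

lemma bil_smul_right (M : Mat4) (z : V4) (c : ℝ) (w : V4) : bil M z (c • w) = c * bil M z w := by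
  simp only [bil_expand, Fin.sum_univ_four, Pi.smul_apply, smul_eq_mul]; ring

end AlgLemmas
section AnaLemmas

/-- derivative of each entry -/
lemma hf_entry (A : V4 → Mat4) (hA2 : ∀ i j, ContDiff ℝ (⊤ : ℕ∞) fun x => A x i j) (x : V4)
    (i j : Fin 4) : HasFDerivAt (fun y => A y i j) (fderiv ℝ (fun y => A y i j) x) x :=
  (((hA2 i j).differentiable (by simp)) x).hasFDerivAt

lemma Dd_apply (A : V4 → Mat4) (x u : V4) (i j : Fin 4) :
    Dd A x u i j = fderiv ℝ (fun y => A y i j) x u := rfl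

lemma Dd_skew (A : V4 → Mat4) (hA1 : ∀ y, (A y)ᵀ = -(A y)) (x u : V4) :
    (Dd A x u)ᵀ = -(Dd A x u) := by
  ext i j
  have hfun : (fun y => A y j i) = fun y => -(A y i j) := by
    funext y
    have h := congrFun (congrFun (hA1 y) i) j
    simpa [Matrix.transpose_apply] using h
  show Dd A x u j i = -(Dd A x u i j)
  rw [Dd_apply, Dd_apply, hfun, fderiv_fun_neg]
  simp

noncomputable def Lbil (A : V4 → Mat4) (x v w : V4) : V4 →L[ℝ] ℝ :=
  ∑ i, ∑ j, ∑ σ, (v i * ηm σ σ * w j) •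
    (A x i σ • fderiv ℝ (fun y => A y σ j) x + A x σ j • fderiv ℝ (fun y => A y i σ) x)

lemma hasF_bil (A : V4 → Mat4) (hA2 : ∀ i j, ContDiff ℝ (⊤ : ℕ∞) fun x => A x i j) (x v w : V4) :
    HasFDerivAt (fun y => bil (A y * ηm * A y) v w) (Lbil A x v w) x := by
  have heq : (fun y => bil (A y * ηm * A y) v w)
      = fun y => ∑ i, ∑ j, ∑ σ, v i * A y i σ * ηm σ σ * A y σ j * w j :=
    funext fun y => bil_mEm (A y) (A y) v w
  rw [heq, Lbil]
  refine HasFDerivAt.fun_sum fun i _ => HasFDerivAt.fun_sum fun j _ => HasFDerivAt.fun_sum fun σ _ => ?_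
  have hmul := ((hf_entry A hA2 x i σ).fun_mul (hf_entry A hA2 x σ j)).const_mul
    (v i * ηm σ σ * w j)
  have hfun : (fun y => (v i * ηm σ σ * w j) * (A y i σ * A y σ j))
      = fun y => v i * A y i σ * ηm σ σ * A y σ j * w j := funext fun y => by ring
  rw [hfun] at hmul
  exact hmul

lemma Lbil_apply (A : V4 → Mat4) (x v w u : V4) :
    Lbil A x v w u = bil (Dd A x u * ηm * A x) v w + bil (A x * ηm * Dd A x u) v w := by
  rw [bil_mEm, bil_mEm, ← Finset.sum_add_distrib, Lbil]
  simp only [ContinuousLinearMap.coe_sum', Finset.sum_apply]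
  refine Finset.sum_congr rfl fun i _ => ?_
  rw [← Finset.sum_add_distrib]
  refine Finset.sum_congr rfl fun j _ => ?_
  rw [← Finset.sum_add_distrib]
  refine Finset.sum_congr rfl fun σ _ => ?_
  simp only [ContinuousLinearMap.smul_apply, ContinuousLinearMap.add_apply, smul_eq_mul]
  rw [Dd_apply, Dd_apply]
  ring

noncomputable def Ltr (A : V4 → Mat4) (x : V4) : V4 →L[ℝ] ℝ :=
  ∑ i, ∑ p, (ηm i i * ηm p p) •
    (A x p i • fderiv ℝ (fun y => A y i p) x + A x i p • fderiv ℝ (fun y => A y p i) x)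

lemma hasF_tr (A : V4 → Mat4) (hA2 : ∀ i j, ContDiff ℝ (⊤ : ℕ∞) fun x => A x i j) (x : V4) :
    HasFDerivAt (fun y => (hat (A y) * hat (A y)).trace) (Ltr A x) x := by
  have heq : (fun y => (hat (A y) * hat (A y)).trace)
      = fun y => ∑ i, ∑ p, (ηm i i * ηm p p) * (A y p i * A y i p) :=
    funext fun y => trace_expand (A y)
  rw [heq, Ltr]
  refine HasFDerivAt.fun_sum fun i _ => HasFDerivAt.fun_sum fun p _ => ?_
  exact ((hf_entry A hA2 x p i).mul (hf_entry A hA2 x i p)).const_mul (ηm i i * ηm p p)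

/-- x ↦ fderiv of a smooth function applied to a fixed direction is smooth -/
lemma cd_fderiv {f : V4 → ℝ} (hf : ContDiff ℝ (⊤ : ℕ∞) f) (w : V4) :
    ContDiff ℝ (⊤ : ℕ∞) (fun x => fderiv ℝ f x w) :=
  (hf.fderiv_right (by simp)).clm_apply contDiff_const

lemma tf_contDiff (A : V4 → Mat4) (hA2 : ∀ i j, ContDiff ℝ (⊤ : ℕ∞) fun x => A x i j) :
    ContDiff ℝ (⊤ : ℕ∞) (fun y => (hat (A y) * hat (A y)).trace) := by
  have heq : (fun y => (hat (A y) * hat (A y)).trace)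
      = fun y => ∑ i, ∑ p, (ηm i i * ηm p p) * (A y p i * A y i p) :=
    funext fun y => trace_expand (A y)
  rw [heq]
  exact ContDiff.sum fun i _ => ContDiff.sum fun p _ => contDiff_const.mul ((hA2 p i).mul (hA2 i p))

lemma codiff_e_contDiff (A : V4 → Mat4) (hA2 : ∀ i j, ContDiff ℝ (⊤ : ℕ∞) fun x => A x i j)
    (α : Fin 4) : ContDiff ℝ (⊤ : ℕ∞) (fun x => codiff A x (e α)) := by
  have heq : (fun x => codiff A x (e α))
      = fun x => -∑ γ, ∑ δ, ηm γ δ * fderiv ℝ (fun y => A y δ α) x (e γ) := by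
    funext x
    rw [codiff]
    congr 1
    refine Finset.sum_congr rfl fun γ _ => Finset.sum_congr rfl fun δ _ => ?_
    rw [bil_ee, Dd_apply]
  rw [heq]
  exact (ContDiff.sum fun γ _ => ContDiff.sum fun δ _ =>
    contDiff_const.mul (cd_fderiv (hA2 δ α) (e γ))).neg

end AnaLemmas
lemma pair (A : V4 → Mat4) (hCKY : FlatCKY A) (x u v w : V4) :
    bil (Dd A x u * ηm * A x) v w + bil (Dd A x v * ηm * A x) u w =
      2 * ηb u v * icontr (fun z => -(1/3 : ℝ) * codiff A x z) (A x) w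
        - (-(1/3 : ℝ) * codiff A x u) * bil (A x) v w
        - (-(1/3 : ℝ) * codiff A x v) * bil (A x) u w := by
  rw [B1, B1, ← Finset.sum_add_distrib]
  have hterm : ∀ σ : Fin 4,
      bil (Dd A x u) v (e σ) * ηm σ σ * bil (A x) (e σ) w +
        bil (Dd A x v) u (e σ) * ηm σ σ * bil (A x) (e σ) w =
      2 * ηb u v * ((-(1/3 : ℝ) * codiff A x (e σ)) * ηm σ σ * bil (A x) (e σ) w)
        - (-(1/3 : ℝ) * codiff A x u) * (ηb v (e σ) * ηm σ σ * bil (A x) (e σ) w)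
        - (-(1/3 : ℝ) * codiff A x v) * (ηb u (e σ) * ηm σ σ * bil (A x) (e σ) w) := by
    intro σ
    have h := hCKY x u v (e σ)
    linear_combination (ηm σ σ * bil (A x) (e σ) w) * h
  rw [Finset.sum_congr rfl fun σ _ => hterm σ]
  rw [Finset.sum_sub_distrib, Finset.sum_sub_distrib, ← Finset.mul_sum, ← Finset.mul_sum,
    ← Finset.mul_sum, B2, B2, icontr_eq]
lemma icontr_add (ω : V4 → ℝ) (G : Mat4) (z z' : V4) :
    icontr ω G (z + z') = icontr ω G z + icontr ω G z' := by
  simp only [icontr, bil_add_right, mul_add, Finset.sum_add_distrib]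

lemma icontr_smul (ω : V4 → ℝ) (G : Mat4) (c : ℝ) (z : V4) :
    icontr ω G (c • z) = c * icontr ω G z := by
  simp only [icontr, bil_smul_right, Finset.mul_sum]
  exact Finset.sum_congr rfl fun α _ => Finset.sum_congr rfl fun β _ => by ring

/-- The traceless square of a conformal Killing–Yano tensor is a conformal
Killing tensor (flat case). -/
theorem stmt17 (A : V4 → Mat4) (hA : SmoothTwoFormField A) (hCKY : FlatCKY A)
    (K P : V4 → V4 → V4 → ℝ)
    (hK : ∀ x y z, K x y z = ηb ((hat (A x) * hat (A x)) *ᵥ y) z)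
    (hP : ∀ x y z, P x y z =
      K x y z - (1/4) * (hat (A x) * hat (A x)).trace * ηb y z) :
    ∃ b : V4 → V4 → ℝ,
      (∀ w, ContDiff ℝ (⊤ : ℕ∞) (fun x => b x w)) ∧ (∀ x, IsLinearMap ℝ (b x)) ∧
      ∀ x u v w : V4,
        fderiv ℝ (fun y => P y v w) x u + fderiv ℝ (fun y => P y w u) x v +
          fderiv ℝ (fun y => P y u v) x w =
        ηb u v * b x w + ηb v w * b x u + ηb w u * b x v := by
  obtain ⟨hA1, hA2⟩ := hA
  refine ⟨fun x w => 2 * icontr (fun z => -(1/3 : ℝ) * codiff A x z) (A x) w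
    - 1/4 * fderiv ℝ (fun y => (hat (A y) * hat (A y)).trace) x w, ?_, ?_, ?_⟩
  · -- smoothness in x
    intro w
    refine ContDiff.sub ?_ (contDiff_const.mul (cd_fderiv (tf_contDiff A hA2) w))
    refine contDiff_const.mul ?_
    have heq : (fun x => icontr (fun z => -(1/3:ℝ) * codiff A x z) (A x) w)
        = fun x => ∑ α, ∑ β, ηm α β * (-(1/3:ℝ) * codiff A x (e α)) * (∑ j, A x β j * w j) := by
      funext x
      rw [icontr]
      exact Finset.sum_congr rfl fun α _ => Finset.sum_congr rfl fun β _ => by rw [bil_e_left]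
    rw [heq]
    refine ContDiff.sum fun α _ => ContDiff.sum fun β _ => ?_
    exact (contDiff_const.mul (contDiff_const.mul (codiff_e_contDiff A hA2 α))).mul
      (ContDiff.sum fun j _ => (hA2 β j).mul contDiff_const)
  · -- linearity in w
    intro x
    constructor
    · intro z z'
      dsimp only
      rw [icontr_add, map_add]
      ring
    · intro c z
      dsimp only
      rw [icontr_smul, (fderiv ℝ (fun y => (hat (A y) * hat (A y)).trace) x).map_smul, smul_eq_mul, smul_eq_mul]
      ring
  · -- main identity
    intro x u v w
    have hPfun : ∀ v w : V4, (fun y => P y v w)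
        = fun y => bil (A y * ηm * A y) v w
            - 1/4 * (hat (A y) * hat (A y)).trace * ηb v w := by
      intro v w; funext y; rw [hP, hK, KA]
    have hPder : ∀ u v w : V4, fderiv ℝ (fun y => P y v w) x u
        = bil (Dd A x u * ηm * A x) v w + bil (A x * ηm * Dd A x u) v w
          - 1/4 * (Ltr A x u) * ηb v w := by
      intro u v w
      rw [hPfun]
      have h1 := hasF_bil A hA2 x v w
      have h3 := ((hasF_tr A hA2 x).const_mul (1/4 : ℝ)).mul_const (ηb v w)
      have h4 := h1.fun_sub h3
      rw [h4.fderiv]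
      simp only [ContinuousLinearMap.sub_apply, ContinuousLinearMap.smulRight_apply,
        ContinuousLinearMap.smul_apply, smul_eq_mul, Lbil_apply]
      ring
    have htr : fderiv ℝ (fun y => (hat (A y) * hat (A y)).trace) x = Ltr A x :=
      (hasF_tr A hA2 x).fderiv
    dsimp only
    rw [hPder, hPder, hPder, htr]
    rw [bil_swap (A x) (Dd A x u) (hA1 x) (Dd_skew A hA1 x u) v w,
        bil_swap (A x) (Dd A x v) (hA1 x) (Dd_skew A hA1 x v) w u,
        bil_swap (A x) (Dd A x w) (hA1 x) (Dd_skew A hA1 x w) u v]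
    have P1 := pair A hCKY x u v w
    have P2 := pair A hCKY x v w u
    have P3 := pair A hCKY x w u v
    have S1 := bil_skew_add (A x) (hA1 x) v w
    have S2 := bil_skew_add (A x) (hA1 x) u w
    have S3 := bil_skew_add (A x) (hA1 x) v u
    linear_combination P1 + P2 + P3 - (-(1/3 : ℝ) * codiff A x u) * S1
      - (-(1/3 : ℝ) * codiff A x v) * S2 - (-(1/3 : ℝ) * codiff A x w) * S3
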